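/- Let ω, γ, κ > 0 and G, Δ ∈ ℝ, and let A be the real 6×6 matrix [[0, ω, 0, 0, 0, 0],[−ω, −γ, G, 0, G, 0],[0, 0, −κ, Δ, 0, 0],[G, 0, −Δ, −κ, 0, 0],[0, 0, 0, 0, −κ, −Δ],[G, 0, 0, 0, Δ, −κ]] (the bichromatically driven optomechanical drift matrix with balanced couplings G_A = G_B = G and opposite detunings Δ_A = Δ, Δ_B = −Δ). Then every eigenvalue of A over ℂ has strictly negative real part; in particular, the steady state is stable for all values of G and Δ. -/

import Mathlib

/-!
Expanding the determinant, the characteristic polynomial of the drift matrix is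
`(X² + γX + ω²)((X + κ)² + Δ²)²`, in which the coupling `G` cancels. Both factors are
monic real quadratics with positive coefficients, and the roots of such a quadratic lie in
the open left half-plane.
-/

open Matrix

noncomputable section

/-- Drift matrix of the bichromatically driven optomechanical system with balanced
couplings `G_A = G_B = G` and opposite detunings `Δ_A = Δ`, `Δ_B = −Δ`, in the
quadrature basis `(δq, δp, δX_A, δY_A, δX_B, δY_B)`. -/
def driftBal (ω γ κ G Δ : ℝ) : Matrix (Fin 6) (Fin 6) ℝ :=
  !![0, ω, 0, 0, 0, 0;
     -ω, -γ, G, 0, G, 0;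
     0, 0, -κ, Δ, 0, 0;
     G, 0, -Δ, -κ, 0, 0;
     0, 0, 0, 0, -κ, -Δ;
     G, 0, 0, 0, Δ, -κ]

open Polynomial

theorem Complex.re_neg_of_sq_add_mul_add_eq_zero {b c : ℝ} (hb : 0 < b) (hc : 0 < c) {z : ℂ}
    (hz : z ^ 2 + b * z + c = 0) : z.re < 0 := by
  have hre := congrArg Complex.re hz
  have him := congrArg Complex.im hz
  simp only [pow_two, add_re, add_im, mul_re, mul_im, ofReal_re, ofReal_im, zero_re, zero_im] at hre him
  rcases mul_eq_zero.mp (show z.im * (2 * z.re + b) = 0 by linarith) with h | h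
  · rw [h] at hre
    nlinarith
  · linarith

set_option maxHeartbeats 1000000 in
theorem driftBal_charpoly (ω γ κ G Δ : ℝ) :
    (driftBal ω γ κ G Δ).charpoly
      = (X ^ 2 + C γ * X + C ω ^ 2) * ((X + C κ) ^ 2 + C Δ ^ 2) ^ 2 := by
  simp [charpoly, charmatrix, driftBal, det_succ_row_zero, Fin.sum_univ_succ, Fin.succAbove]
  ring

theorem balanced_bichromatic_stable (ω γ κ G Δ : ℝ)
    (hω : 0 < ω) (hγ : 0 < γ) (hκ : 0 < κ) :
    ∀ z ∈ spectrum ℂ ((driftBal ω γ κ G Δ).map Complex.ofReal), z.re < 0 := by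
  intro z hz
  have hroot : (z ^ 2 + γ * z + ω ^ 2) * ((z + κ) ^ 2 + Δ ^ 2) ^ 2 = 0 := by
    rw [mem_spectrum_iff_isRoot_charpoly] at hz
    change ((driftBal ω γ κ G Δ).map Complex.ofRealHom).charpoly.IsRoot z at hz
    simpa [charpoly_map, driftBal_charpoly] using hz
  rcases mul_eq_zero.mp hroot with hmech | hcav
  · exact Complex.re_neg_of_sq_add_mul_add_eq_zero (c := ω ^ 2) hγ (by positivity)
      (by push_cast; exact hmech)
  · refine Complex.re_neg_of_sq_add_mul_add_eq_zero (b := 2 * κ) (c := κ ^ 2 + Δ ^ 2)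
      (by positivity) (by positivity) ?_
    push_cast
    linear_combination pow_eq_zero_iff two_ne_zero |>.mp hcav

end
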